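/- arXiv:2007.13659 — 3 statements merged into one kernel-verified Lean document; each statement's English description precedes it below -/
import Mathlib

section
/- Under the stated assumptions, the parameter $\theta(\tau) = \int \frac{\partial m_0(x,q_\tau)}{\partial x_1} dF_X(x)$ satisfies the alternative representation $\theta(\tau) = -\int \omega(x) \, 1\{y \le q_\tau\} \, dF_{Y,X}(y,x)$, where $\omega(x) = \partial \log f_{X_1|X_{-1}=x_{-1}}(x_1)/\partial x_1$. -/
/-!
Integrating by parts in `x₁` for fixed `x₋₁` gives
`∫ ω m₀ f dx₁ = ∫ m₀ ∂f/∂x₁ dx₁ = -∫ ∂m₀/∂x₁ f dx₁`, since `m₀ f` vanishes at `±∞`; averaging over `x₋₁` yields `E[ω(X) m₀(X)] = -θ(τ)`.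
Because `m₀(X) = E[1{Y ≤ q_τ} | X]`, the tower property turns `E[ω(X) m₀(X)]` into
`E[ω(X) 1{Y ≤ q_τ}]`. This last step needs `ω ∘ X` to be `σ(X)`-measurable, which is not assumed:
the distributional identity makes `x₋₁ ↦ ∫_S f(x₋₁, x₁) dx₁` a.e.-measurable, so by continuity in
`x₁` the density, hence `log f` and its `x₁`-derivative `ω`, agree off a null set of `x₋₁` with
jointly measurable functions.
-/

open MeasureTheory Filter Set Topology

theorem integral_deriv_log_mul_add_eq_zero {φ m : ℝ → ℝ} {C : ℝ} (hφ : Differentiable ℝ φ)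
    (hφ_pos : ∀ t, 0 < φ t) (hφ_top : Tendsto φ atTop (𝓝 0)) (hφ_bot : Tendsto φ atBot (𝓝 0))
    (hφ_one : ∫ t, φ t = 1) (hm : Differentiable ℝ m) (hm_bdd : ∀ t, |m t| ≤ C)
    (hm'φ : Integrable fun t => deriv m t * φ t) :
    ∫ t, (deriv (fun u => Real.log (φ u)) t * m t + ∫ s, deriv m s * φ s) * φ t = 0 := by
  -- `(log φ)' m φ = m φ'` need not be integrable; if it is not, the integral is `0` by convention
  set T := ∫ s, deriv m s * φ s
  by_cases hint : Integrable fun t => (deriv (fun u => Real.log (φ u)) t * m t + T) * φ t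
  swap
  · exact integral_undef hint
  have hφ_int : Integrable φ := .of_integral_ne_zero (by simp [hφ_one])
  have hrest : Integrable fun t => T * φ t - deriv m t * φ t := (hφ_int.const_mul T).sub hm'φ
  have hsplit : ∀ t, (deriv (fun u => Real.log (φ u)) t * m t + T) * φ t
      = deriv (m * φ) t + (T * φ t - deriv m t * φ t) := by
    intro t
    rw [((hφ t).hasDerivAt.log (hφ_pos t).ne').deriv, deriv_mul (hm t) (hφ t)]
    field_simp [(hφ_pos t).ne']
    ring
  have hmφ_lim : ∀ l : Filter ℝ, Tendsto φ l (𝓝 0) → Tendsto (m * φ) l (𝓝 0) := fun l hl =>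
    squeeze_zero_norm (a := fun t => C * φ t) (fun t => by
      rw [Pi.mul_apply, norm_mul, Real.norm_eq_abs, Real.norm_eq_abs, abs_of_pos (hφ_pos t)]
      exact mul_le_mul_of_nonneg_right (hm_bdd t) (hφ_pos t).le)
      (by simpa using hl.const_mul C)
  simp_rw [hsplit] at hint ⊢
  have hderiv_int : Integrable (deriv (m * φ)) := by
    refine (hint.sub hrest).congr (ae_of_all _ fun t => ?_)
    simp only [Pi.sub_apply, add_sub_cancel_right]
  rw [integral_add hderiv_int hrest, integral_sub (hφ_int.const_mul T) hm'φ, integral_const_mul,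
    hφ_one, integral_of_hasDerivAt_of_tendsto (fun t => ((hm t).mul (hφ t)).hasDerivAt)
      hderiv_int (hmφ_lim _ hφ_bot) (hmφ_lim _ hφ_top)]
  ring

theorem abs_integral_mul_le_of_abs_le {g φ : ℝ → ℝ} {C : ℝ} (hg : ∀ t, |g t| ≤ C)
    (hφ_nonneg : ∀ t, 0 ≤ φ t) (hφ_one : ∫ t, φ t = 1) : |∫ t, g t * φ t| ≤ C := by
  have hφ_int : Integrable φ := .of_integral_ne_zero (by simp [hφ_one])
  calc |∫ t, g t * φ t| ≤ ∫ t, C * φ t :=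
        norm_integral_le_of_norm_le (f := fun t => g t * φ t) (hφ_int.const_mul C)
          (ae_of_all _ fun t => by
            rw [norm_mul, Real.norm_eq_abs, Real.norm_eq_abs, abs_of_nonneg (hφ_nonneg t)]
            exact mul_le_mul_of_nonneg_right (hg t) (hφ_nonneg t))
    _ = C := by rw [integral_const_mul, hφ_one, mul_one]

section Measurability

variable {E : Type*} [MeasurableSpace E]

theorem measurable_uncurry_of_continuous_of_measurable_rat {φ : E → ℝ → ℝ}
    (hc : ∀ x, Continuous (φ x)) (hq : ∀ q : ℚ, Measurable fun x => φ x q) :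
    Measurable fun p : ℝ × E => φ p.2 p.1 :=
  measurable_uncurry_of_continuous_of_measurable (u := fun t x => φ x t) hc fun t => by
    obtain ⟨r, -, -, hr⟩ := Real.exists_seq_rat_strictMono_tendsto t
    exact measurable_of_tendsto_metrizable (fun n => hq (r n))
      (tendsto_pi_nhds.2 fun x => ((hc x).tendsto t).comp hr)

theorem measurable_deriv_of_measurable_uncurry {φ : E → ℝ → ℝ}
    (hm : Measurable fun p : ℝ × E => φ p.2 p.1) (hd : ∀ x, Differentiable ℝ (φ x)) :
    Measurable fun p : ℝ × E => deriv (φ p.2) p.1 :=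
  measurable_of_tendsto_metrizable' (𝓝[>] 0)
    (f := fun (h : ℝ) (p : ℝ × E) => h⁻¹ * (φ p.2 (p.1 + h) - φ p.2 p.1))
    (fun h =>
      ((hm.comp (measurable_fst.add_const h |>.prodMk measurable_snd)).sub hm).const_mul h⁻¹)
    (tendsto_pi_nhds.2 fun p => (hd p.2 p.1).hasDerivAt.tendsto_slope_zero_right)

theorem exists_measurable_ae_eq_deriv {ν : Measure E} {φ : E → ℝ → ℝ}
    (hd : ∀ x, Differentiable ℝ (φ x)) (hq : ∀ q : ℚ, AEStronglyMeasurable (fun x => φ x q) ν) :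
    ∃ w : ℝ × E → ℝ, Measurable w ∧ ∀ᵐ x ∂ν, ∀ t, w (t, x) = deriv (φ x) t := by
  classical
  set N := toMeasurable ν (⋃ q : ℚ, {x | φ x q ≠ (hq q).mk _ x})
  have hN : ν N = 0 := by
    rw [measure_toMeasurable]
    exact measure_iUnion_null fun q => (hq q).ae_eq_mk
  have hφ_eq : ∀ x ∉ N, ∀ q : ℚ, φ x q = (hq q).mk _ x := fun x hx q => by
    by_contra hne
    exact hx (subset_toMeasurable _ _ (mem_iUnion.2 ⟨q, hne⟩))
  set ψ : E → ℝ → ℝ := fun x => if x ∈ N then 0 else φ x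
  have hψd : ∀ x, Differentiable ℝ (ψ x) := fun x => by
    by_cases hx : x ∈ N <;> simp [ψ, hx, hd x]
  have hψq : ∀ q : ℚ, Measurable fun x => ψ x q := fun q => by
    have hψ_eq : (fun x => ψ x q) = fun x => if x ∈ N then 0 else (hq q).mk _ x := by
      ext x
      by_cases hx : x ∈ N <;> simp [ψ, hx, hφ_eq]
    rw [hψ_eq]
    exact Measurable.ite (measurableSet_toMeasurable _ _) measurable_const
      (hq q).stronglyMeasurable_mk.measurable
  refine ⟨_, measurable_deriv_of_measurable_uncurry
    (measurable_uncurry_of_continuous_of_measurable_rat (fun x => (hψd x).continuous) hψq) hψd, ?_⟩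
  filter_upwards [measure_eq_zero_iff_ae_notMem.1 hN] with x hx t
  simp [ψ, hx]

end Measurability

theorem integral_mul_condExp_of_stronglyMeasurable {Ω : Type*} {m m₀ : MeasurableSpace Ω}
    {μ : Measure Ω} [IsFiniteMeasure μ] (hm : m ≤ m₀) {g Z : Ω → ℝ} (hg : StronglyMeasurable[m] g)
    (hgZ : Integrable (g * Z) μ) (hZ : Integrable Z μ) :
    ∫ a, g a * Z a ∂μ = ∫ a, g a * μ[Z|m] a ∂μ :=
  calc ∫ a, g a * Z a ∂μ = ∫ a, μ[g * Z|m] a ∂μ := (integral_condExp hm).symm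
    _ = _ := integral_congr_ae (condExp_mul_of_stronglyMeasurable_left hg hgZ hZ)

section CondDensity

variable {Ω E : Type*} [MeasurableSpace Ω] [MeasurableSpace E]

/-- `ν` is the law of `X₋₁ = (X ·).2` and `f x₂` the density of `X₁` given `X₋₁ = x₂`. -/
def HasCondDensity (P : Measure Ω) (X : Ω → ℝ × E) (ν : Measure E) (f : E → ℝ → ℝ) : Prop :=
  ∀ g : ℝ × E → ℝ, Integrable (g ∘ X) P →
    ∫ a, g (X a) ∂P = ∫ x₂, (∫ x₁, g (x₁, x₂) * f x₂ x₁) ∂ν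

variable {P : Measure Ω} {X : Ω → ℝ × E} {ν : Measure E} {f : E → ℝ → ℝ}

namespace HasCondDensity

theorem integral_comp_snd (hd : HasCondDensity P X ν f) (hf : ∀ x₂, ∫ x₁, f x₂ x₁ = 1)
    {g : E → ℝ} (hg : Integrable (fun a => g (X a).2) P) :
    ∫ a, g (X a).2 ∂P = ∫ x₂, g x₂ ∂ν := by
  refine (hd (fun x => g x.2) hg).trans (integral_congr_ae (ae_of_all _ fun x₂ => ?_))
  simp only [integral_const_mul, hf, mul_one]

theorem quasiMeasurePreserving_snd [IsFiniteMeasure P] (hd : HasCondDensity P X ν f)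
    (hf : ∀ x₂, ∫ x₁, f x₂ x₁ = 1) (hX : Measurable X) :
    Measure.QuasiMeasurePreserving (fun a => (X a).2) P ν := by
  refine ⟨hX.snd, Measure.AbsolutelyContinuous.mk fun s hs hνs => ?_⟩
  have hint : Integrable (fun a => s.indicator 1 (X a).2) P :=
    (integrable_indicator_iff hs).2 (integrable_const (1 : ℝ)).integrableOn |>.comp_measurable
      hX.snd
  have h := hd.integral_comp_snd hf hint
  rw [← integral_map hX.snd.aemeasurable (by fun_prop), integral_indicator_one hs,
    integral_indicator_one hs, measureReal_def, measureReal_def, hνs,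
    ENNReal.toReal_zero, ENNReal.toReal_eq_zero_iff] at h
  exact h.resolve_right (measure_ne_top _ _)

theorem aestronglyMeasurable_setIntegral [IsProbabilityMeasure P] (hd : HasCondDensity P X ν f)
    (hf : ∀ x₂, ∫ x₁, f x₂ x₁ = 1) (hX : Measurable X) {S : Set ℝ} (hS : MeasurableSet S) :
    AEStronglyMeasurable (fun x₂ => ∫ x₁ in S, f x₂ x₁) ν := by
  have hf_int : ∀ x₂, Integrable (f x₂) := fun x₂ => .of_integral_ne_zero (by simp [hf])
  have hind_int : ∀ T : Set ℝ, MeasurableSet T → Integrable (fun a => T.indicator 1 (X a).1) P :=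
    fun T hT => (integrable_indicator_iff hT).2 (integrable_const (1 : ℝ)).integrableOn
      |>.comp_measurable hX.fst
  have hind : ∀ T : Set ℝ, MeasurableSet T →
      ∫ a, T.indicator 1 (X a).1 ∂P = ∫ x₂, (∫ x₁ in T, f x₂ x₁) ∂ν := fun T hT => by
    refine (hd (fun x => T.indicator 1 x.1) (hind_int T hT)).trans
      (integral_congr_ae (ae_of_all _ fun x₂ => ?_))
    dsimp only
    rw [← integral_indicator hT]
    congr 1 with x₁
    by_cases hx₁ : x₁ ∈ T <;> simp [hx₁]
  -- otherwise both `ν`-integrals below take the junk value `0`,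
  -- yet the two `P`-expectations add up to `1`
  by_contra hF
  have hF' : ¬ AEStronglyMeasurable (fun x₂ => ∫ x₁ in Sᶜ, f x₂ x₁) ν := fun h => hF <| by
    have hcompl : (fun x₂ => ∫ x₁ in S, f x₂ x₁) = fun x₂ => 1 - ∫ x₁ in Sᶜ, f x₂ x₁ := by
      ext x₂
      rw [← hf x₂, ← integral_add_compl hS (hf_int x₂), add_sub_cancel_right]
    rw [hcompl]
    exact aestronglyMeasurable_const.sub h
  have hsum : ∫ a, S.indicator (1 : ℝ → ℝ) (X a).1 + Sᶜ.indicator 1 (X a).1 ∂P = 1 := by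
    simp [indicator_self_add_compl_apply]
  rw [integral_add (hind_int S hS) (hind_int _ hS.compl), hind S hS, hind _ hS.compl,
    integral_undef fun h => hF h.1, integral_undef fun h => hF' h.1] at hsum
  norm_num at hsum

theorem aestronglyMeasurable_apply [IsProbabilityMeasure P] (hd : HasCondDensity P X ν f)
    (hf : ∀ x₂, ∫ x₁, f x₂ x₁ = 1) (hX : Measurable X) (hc : ∀ x₂, Continuous (f x₂)) (t : ℝ) :
    AEStronglyMeasurable (fun x₂ => f x₂ t) ν := by
  refine aestronglyMeasurable_of_tendsto_ae (𝓝[>] 0)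
    (f := fun (h : ℝ) x₂ => h⁻¹ * ∫ x₁ in t..t + h, f x₂ x₁) (fun h => ?_)
    (ae_of_all _ fun x₂ => ?_)
  · exact ((hd.aestronglyMeasurable_setIntegral hf hX measurableSet_Ioc).sub
      (hd.aestronglyMeasurable_setIntegral hf hX measurableSet_Ioc)).const_mul _
  · simpa using ((hc x₂).integral_hasStrictDerivAt t t).hasDerivAt.tendsto_slope_zero_right

theorem exists_measurable_comp_ae_eq_score [IsProbabilityMeasure P] (hd : HasCondDensity P X ν f)
    (hf : ∀ x₂, ∫ x₁, f x₂ x₁ = 1) (hX : Measurable X) (hf_pos : ∀ x₂ x₁, 0 < f x₂ x₁)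
    (hf_diff : ∀ x₂, Differentiable ℝ (f x₂)) {ω : ℝ × E → ℝ}
    (hω : ∀ x₁ x₂, ω (x₁, x₂) = deriv (fun t => Real.log (f x₂ t)) x₁) :
    ∃ w : ℝ × E → ℝ, Measurable w ∧ (fun a => ω (X a)) =ᵐ[P] fun a => w (X a) := by
  obtain ⟨w, hw, hwω⟩ := exists_measurable_ae_eq_deriv
    (fun x₂ => (hf_diff x₂).log fun t => (hf_pos x₂ t).ne') fun q =>
      (Real.measurable_log.comp_aemeasurable (hd.aestronglyMeasurable_apply hf hX
        (fun x₂ => (hf_diff x₂).continuous) q).aemeasurable).aestronglyMeasurable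
  exact ⟨w, hw, ((hd.quasiMeasurePreserving_snd hf hX).ae hwω).mono fun a ha =>
    ((ha (X a).1).trans (hω _ _).symm).symm⟩

theorem integral_score_mul_eq_neg [IsFiniteMeasure P] (hd : HasCondDensity P X ν f)
    (hX : Measurable X) (hf_pos : ∀ x₂ x₁, 0 < f x₂ x₁) (hf_diff : ∀ x₂, Differentiable ℝ (f x₂))
    (hf_top : ∀ x₂, Tendsto (f x₂) atTop (𝓝 0)) (hf_bot : ∀ x₂, Tendsto (f x₂) atBot (𝓝 0))
    (hf : ∀ x₂, ∫ x₁, f x₂ x₁ = 1) {ω : ℝ × E → ℝ}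
    (hω : ∀ x₁ x₂, ω (x₁, x₂) = deriv (fun t => Real.log (f x₂ t)) x₁)
    {m : ℝ × E → ℝ} {B C : ℝ} (hm_diff : ∀ x₂, Differentiable ℝ fun t => m (t, x₂))
    (hm_bdd : ∀ x, |m x| ≤ B) (hm'_bdd : ∀ x₂ x₁, |deriv (fun t => m (t, x₂)) x₁| ≤ C)
    (hm'f : ∀ x₂, Integrable fun x₁ => deriv (fun t => m (t, x₂)) x₁ * f x₂ x₁)
    (hT : Integrable (fun x₂ => ∫ x₁, deriv (fun t => m (t, x₂)) x₁ * f x₂ x₁) ν)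
    (hωm : Integrable (fun a => ω (X a) * m (X a)) P) :
    ∫ a, ω (X a) * m (X a) ∂P = -∫ x₂, (∫ x₁, deriv (fun t => m (t, x₂)) x₁ * f x₂ x₁) ∂ν := by
  set T : E → ℝ := fun x₂ => ∫ x₁, deriv (fun t => m (t, x₂)) x₁ * f x₂ x₁
  have hTX : Integrable (fun a => T (X a).2) P :=
    .of_bound (hT.aestronglyMeasurable.comp_quasiMeasurePreserving
      (hd.quasiMeasurePreserving_snd hf hX)) C (ae_of_all _ fun a =>
        abs_integral_mul_le_of_abs_le (hm'_bdd _) (fun t => (hf_pos _ t).le) (hf _))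
  -- integrating by parts in `x₁` makes the inner integral of `ω m + T` vanish for every `x₂`
  have hsum : ∫ a, ω (X a) * m (X a) + T (X a).2 ∂P = 0 := by
    rw [hd (fun x => ω x * m x + T x.2) (hωm.add hTX)]
    refine integral_eq_zero_of_ae (ae_of_all _ fun x₂ => ?_)
    simp_rw [hω]
    exact integral_deriv_log_mul_add_eq_zero (hf_diff x₂) (hf_pos x₂) (hf_top x₂) (hf_bot x₂)
      (hf x₂) (hm_diff x₂) (fun t => hm_bdd (t, x₂)) (hm'f x₂)
  rw [integral_add hωm hTX, hd.integral_comp_snd hf hTX] at hsum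
  linarith

end HasCondDensity

end CondDensity

theorem theta_alternative_representation_general
    {Ω E : Type*} [MeasurableSpace Ω] [MeasurableSpace E]
    (P : Measure Ω) [IsProbabilityMeasure P]
    (Y : Ω → ℝ) (X : Ω → ℝ × E) (hY : Measurable Y) (hX : Measurable X)
    (ν : Measure E)
    (f : E → ℝ → ℝ)
    (hf_pos : ∀ x₂ x₁, 0 < f x₂ x₁)
    (hf_diff : ∀ x₂, ContDiff ℝ 1 (f x₂))
    (hf_density : ∀ x₂, ∫ x₁, f x₂ x₁ = 1)
    (hf_vanish_top : ∀ x₂, Tendsto (f x₂) atTop (nhds 0))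
    (hf_vanish_bot : ∀ x₂, Tendsto (f x₂) atBot (nhds 0))
    -- the distribution of X has conditional density f w.r.t. ν:
    (hX_dist : ∀ g : ℝ × E → ℝ, Integrable (g ∘ X) P →
      ∫ a, g (X a) ∂P = ∫ x₂, (∫ x₁, g (x₁, x₂) * f x₂ x₁) ∂ν)
    (ω : ℝ × E → ℝ)
    (hω : ∀ x₁ x₂, ω (x₁, x₂) = deriv (fun t => Real.log (f x₂ t)) x₁)
    (qτ : ℝ)
    (m₀ : ℝ × E → ℝ)
    -- m₀(·, qτ) is the conditional CDF of Y given X evaluated at qτ: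
    (hcond : (P[fun a => Set.indicator (Set.Iic qτ) (fun _ => (1 : ℝ)) (Y a)
        | MeasurableSpace.comap X inferInstance]) =ᵐ[P] fun a => m₀ (X a))
    (hm₀_diff : ∀ x₂, ContDiff ℝ 1 (fun t => m₀ (t, x₂)))
    (hm₀_bdd : ∀ x, 0 ≤ m₀ x ∧ m₀ x ≤ 1)
    (hm₀_deriv_bdd : ∃ C, ∀ x₂ x₁, |deriv (fun t => m₀ (t, x₂)) x₁| ≤ C)
    -- sufficient integrability so that all integrals are finite
    (hint1 : Integrable (fun a => ω (X a) *
        Set.indicator (Set.Iic qτ) (fun _ => (1 : ℝ)) (Y a)) P)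
    (hint2 : ∀ x₂, Integrable (fun x₁ => deriv (fun t => m₀ (t, x₂)) x₁ * f x₂ x₁))
    (hint3 : Integrable (fun x₂ => ∫ x₁, deriv (fun t => m₀ (t, x₂)) x₁ * f x₂ x₁) ν)
    (hint4 : Integrable (fun a => ω (X a) * m₀ (X a)) P) :
    ∫ x₂, (∫ x₁, deriv (fun t => m₀ (t, x₂)) x₁ * f x₂ x₁) ∂ν
      = - ∫ a, ω (X a) * Set.indicator (Set.Iic qτ) (fun _ => (1 : ℝ)) (Y a) ∂P := by
  have hd : HasCondDensity P X ν f := hX_dist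
  have hf_diff' := fun x₂ => (hf_diff x₂).differentiable one_ne_zero
  obtain ⟨w, hw, hωw⟩ := hd.exists_measurable_comp_ae_eq_score hf_density hX hf_pos hf_diff' hω
  have hZ : Integrable (fun a => Set.indicator (Set.Iic qτ) (fun _ => (1 : ℝ)) (Y a)) P :=
    ((integrable_const (1 : ℝ)).indicator measurableSet_Iic).comp_measurable hY
  obtain ⟨C, hC⟩ := hm₀_deriv_bdd
  rw [← neg_neg (∫ x₂, _ ∂ν), ← hd.integral_score_mul_eq_neg hX hf_pos hf_diff' hf_vanish_top
    hf_vanish_bot hf_density hω (fun x₂ => (hm₀_diff x₂).differentiable one_ne_zero)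
    (fun x => abs_le.2 ⟨by linarith [(hm₀_bdd x).1], (hm₀_bdd x).2⟩) hC hint2 hint3 hint4]
  congr 1
  calc ∫ a, ω (X a) * m₀ (X a) ∂P = ∫ a, w (X a) * m₀ (X a) ∂P :=
        integral_congr_ae (hωw.mul (.refl _ _))
    _ = ∫ a, w (X a) * P[_|MeasurableSpace.comap X inferInstance] a ∂P :=
        integral_congr_ae ((EventuallyEq.refl _ _).mul hcond.symm)
    _ = ∫ a, w (X a) * Set.indicator (Set.Iic qτ) (fun _ => (1 : ℝ)) (Y a) ∂P :=
        (integral_mul_condExp_of_stronglyMeasurable hX.comap_le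
          (hw.comp (comap_measurable X)).stronglyMeasurable
          (hint1.congr (hωw.mul (.refl _ _))) hZ).symm
    _ = ∫ a, ω (X a) * Set.indicator (Set.Iic qτ) (fun _ => (1 : ℝ)) (Y a) ∂P :=
        integral_congr_ae (hωw.symm.mul (.refl _ _))

/-- alternative representation of `θ(τ)`.
`(Y, X)` with `X = (X₁, X₋₁)` valued in `ℝ × E`.  Conditional on `X₋₁ = x₂`,
`X₁` has a positive continuously differentiable density `f x₂` vanishing at the
boundary of its support (all of `ℝ`); the distribution of `X` is represented by
`hX_dist`.  `m₀ (x, q) = P(Y ≤ q ∣ X = x)` (hypothesis `hcond`), differentiable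
in `x₁` with bounded derivative, and `ω` is the score.  Then
`θ(τ) = ∫ ∂_{x₁} m₀(x, q_τ) dF_X(x) = -∫ ω(x) 1{y ≤ q_τ} dF_{Y,X}(y, x)`. -/
theorem theta_alternative_representation
    {Ω E : Type*} [MeasurableSpace Ω] [MeasurableSpace E]
    (P : Measure Ω) [IsProbabilityMeasure P]
    (Y : Ω → ℝ) (X : Ω → ℝ × E) (hY : Measurable Y) (hX : Measurable X)
    (ν : Measure E) [IsProbabilityMeasure ν]
    (f : E → ℝ → ℝ)
    (hf_pos : ∀ x₂ x₁, 0 < f x₂ x₁)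
    (hf_diff : ∀ x₂, ContDiff ℝ 1 (f x₂))
    (hf_density : ∀ x₂, ∫ x₁, f x₂ x₁ = 1)
    (hf_vanish_top : ∀ x₂, Tendsto (f x₂) atTop (nhds 0))
    (hf_vanish_bot : ∀ x₂, Tendsto (f x₂) atBot (nhds 0))
    -- the distribution of X has conditional density f w.r.t. ν:
    (hX_dist : ∀ g : ℝ × E → ℝ, Integrable (g ∘ X) P →
      ∫ a, g (X a) ∂P = ∫ x₂, (∫ x₁, g (x₁, x₂) * f x₂ x₁) ∂ν)
    (ω : ℝ × E → ℝ)
    (hω : ∀ x₁ x₂, ω (x₁, x₂) = deriv (fun t => Real.log (f x₂ t)) x₁)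
    (qτ : ℝ)
    (m₀ : ℝ × E → ℝ)
    -- m₀(·, qτ) is the conditional CDF of Y given X evaluated at qτ:
    (hcond : (P[fun a => Set.indicator (Set.Iic qτ) (fun _ => (1 : ℝ)) (Y a)
        | MeasurableSpace.comap X inferInstance]) =ᵐ[P] fun a => m₀ (X a))
    (hm₀_diff : ∀ x₂, ContDiff ℝ 1 (fun t => m₀ (t, x₂)))
    (hm₀_bdd : ∀ x, 0 ≤ m₀ x ∧ m₀ x ≤ 1)
    (hm₀_deriv_bdd : ∃ C, ∀ x₂ x₁, |deriv (fun t => m₀ (t, x₂)) x₁| ≤ C)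
    -- sufficient integrability so that all integrals are finite
    (hint1 : Integrable (fun a => ω (X a) *
        Set.indicator (Set.Iic qτ) (fun _ => (1 : ℝ)) (Y a)) P)
    (hint2 : ∀ x₂, Integrable (fun x₁ => deriv (fun t => m₀ (t, x₂)) x₁ * f x₂ x₁))
    (hint3 : Integrable (fun x₂ => ∫ x₁, deriv (fun t => m₀ (t, x₂)) x₁ * f x₂ x₁) ν)
    (hint4 : Integrable (fun a => ω (X a) * m₀ (X a)) P) :
    ∫ x₂, (∫ x₁, deriv (fun t => m₀ (t, x₂)) x₁ * f x₂ x₁) ∂ν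
      = - ∫ a, ω (X a) * Set.indicator (Set.Iic qτ) (fun _ => (1 : ℝ)) (Y a) ∂P :=
  theta_alternative_representation_general P Y X hY hX ν f hf_pos hf_diff hf_density hf_vanish_top
    hf_vanish_bot hX_dist ω hω qτ m₀ hcond hm₀_diff hm₀_bdd hm₀_deriv_bdd hint1 hint2 hint3 hint4
end

section
/- (UQPE representation, Corollary 1 of Firpo-Fortin-Lemieux.) Suppose $F^\varepsilon_Y$ is a family of CDFs with $F^0_Y = F_Y$, $F^\varepsilon_Y(y)$ differentiable in $\varepsilon$ at $\varepsilon=0$ with derivative $\theta(y)$ continuous in $y$, $F_Y$ has a continuous positive density $f_Y$ in a neighborhood of its $\tau$-quantile $q_\tau$, and $(\varepsilon,y) \mapsto F^\varepsilon_Y(y)$ is continuously differentiable near $(0,q_\tau)$. Then the quantile function $\varepsilon \mapsto Q_\tau(F^\varepsilon_Y)$ is differentiable at $\varepsilon = 0$ and $\frac{\partial Q_\tau(F^\varepsilon_Y)}{\partial \varepsilon}\Big|_{\varepsilon=0} = -\frac{\theta(q_\tau)}{f_Y(q_\tau)}$. -/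
/-!
By the implicit function theorem, near `ε = 0` the level set `F ε y = τ` is the graph of a
function `ψ` with `ψ 0 = q_τ` and `ψ' 0 = -∂_ε F / ∂_y F = -θ(q_τ) / f_Y(q_τ)`. Continuity of
`∂_y F` keeps `F ε` strictly increasing at `ψ ε`, so for a monotone `F ε` no point left of `ψ ε`
reaches level `τ`: the quantile `Q_τ(F ε)` is `ψ ε` near `0` and inherits its derivative.
-/

open Filter Topology

noncomputable def quantile (G : ℝ → ℝ) (τ : ℝ) : ℝ := sInf {y | τ ≤ G y}

theorem Monotone.quantile_eq_of_hasDerivAt_pos {G : ℝ → ℝ} {x d τ : ℝ} (hG : Monotone G)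
    (hx : G x = τ) (hd : HasDerivAt G d x) (hd_pos : 0 < d) : quantile G τ = x := by
  -- a point `z < x` with `τ ≤ G z` would make `G` constant on `[z, x]`, forcing `d = 0`
  have hlb : ∀ z, τ ≤ G z → x ≤ z := by
    intro z hz
    by_contra! hzx
    have hx_mem : x ∈ Set.Icc z x := ⟨hzx.le, le_rfl⟩
    have hconst : Set.EqOn G (fun _ => τ) (Set.Icc z x) := fun w hw =>
      le_antisymm (hx ▸ hG hw.2) (hz.trans (hG hw.1))
    have hd_zero : d = 0 := (uniqueDiffOn_Icc hzx x hx_mem).eq_deriv _ hd.hasDerivWithinAt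
      ((hasDerivWithinAt_const x _ τ).congr hconst (hconst hx_mem))
    exact hd_pos.ne' hd_zero
  exact le_antisymm (csInf_le ⟨x, hlb⟩ hx.ge) (le_csInf ⟨x, hx.ge⟩ hlb)

section Partial

variable {𝕜 : Type*} [NontriviallyNormedField 𝕜] {F : Type*} [NormedAddCommGroup F]
  [NormedSpace 𝕜 F] {f : 𝕜 × 𝕜 → F} {f' : 𝕜 × 𝕜 →L[𝕜] F} {x y : 𝕜}

theorem HasFDerivAt.hasDerivAt_prodMk_left (hf : HasFDerivAt f f' (x, y)) :
    HasDerivAt (fun x => f (x, y)) (f' (1, 0)) x :=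
  hf.comp_hasDerivAt x ((hasDerivAt_id x).prodMk (hasDerivAt_const x y))

theorem HasFDerivAt.hasDerivAt_prodMk_right (hf : HasFDerivAt f f' (x, y)) :
    HasDerivAt (fun y => f (x, y)) (f' (0, 1)) y :=
  hf.comp_hasDerivAt y ((hasDerivAt_const y x).prodMk (hasDerivAt_id y))

end Partial

theorem HasStrictFDerivAt.exists_implicit_hasDerivAt {𝕜 : Type*} [NontriviallyNormedField 𝕜]
    [CompleteSpace 𝕜] {f : 𝕜 × 𝕜 → 𝕜} {f' : 𝕜 × 𝕜 →L[𝕜] 𝕜} {p : 𝕜 × 𝕜}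
    (hf : HasStrictFDerivAt f f' p) (h₂ : f' (0, 1) ≠ 0) :
    ∃ ψ : 𝕜 → 𝕜, Tendsto ψ (𝓝 p.1) (𝓝 p.2) ∧ (∀ᶠ x in 𝓝 p.1, f (x, ψ x) = f p) ∧
      HasDerivAt ψ (-f' (1, 0) / f' (0, 1)) p.1 := by
  set e := ContinuousLinearEquiv.unitsEquivAut 𝕜 (Units.mk0 _ h₂)
  have he : (e : 𝕜 →L[𝕜] 𝕜) = f' ∘L .inr 𝕜 𝕜 𝕜 := ContinuousLinearMap.ext_ring (by simp [e])
  have hinv : (f' ∘L .inr 𝕜 𝕜 𝕜).IsInvertible := ⟨e, he⟩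
  refine ⟨_, hf.tendsto_implicitFunctionOfProdDomain hinv,
    hf.eventually_apply_implicitFunctionOfProdDomain hinv, ?_⟩
  refine (hf.hasStrictFDerivAt_implicitFunctionOfProdDomain hinv).hasFDerivAt.hasDerivAt
    |>.congr_deriv ?_
  rw [← he]
  simp [e, div_eq_mul_inv, neg_mul]

theorem ContDiffAt.eventually_exists_pos_hasDerivAt_prodMk_right {f : ℝ × ℝ → ℝ} {p : ℝ × ℝ}
    (hf : ContDiffAt ℝ 1 f p) (hpos : 0 < fderiv ℝ f p (0, 1)) :
    ∀ᶠ q in 𝓝 p, ∃ d, 0 < d ∧ HasDerivAt (fun y => f (q.1, y)) d q.2 := by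
  have hcont : ContinuousAt (fun q => fderiv ℝ f q (0, 1)) p :=
    (hf.continuousAt_fderiv one_ne_zero).clm_apply continuousAt_const
  filter_upwards [hf.eventually (by simp), hcont.eventually (eventually_gt_nhds hpos)]
    with q hq hq_pos
  exact ⟨_, hq_pos, (hq.differentiableAt one_ne_zero).hasFDerivAt.hasDerivAt_prodMk_right⟩

theorem uqpe_representation_general
    (F : ℝ → ℝ → ℝ) (θ fY : ℝ → ℝ) (τ qτ : ℝ)
    -- each F ε is a CDF
    (hCDF_mono : ∀ ε, Monotone (F ε))
    -- qτ is the τ-quantile of F 0, i.e. F 0 q_τ = τ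
    (hqτ : F 0 qτ = τ)
    -- differentiability in ε at 0, with derivative θ(y) continuous in y
    (hθ : ∀ y, HasDerivAt (fun ε => F ε y) (θ y) 0)
    -- continuous positive density of F 0 in a neighborhood of q_τ
    (hfY : ∀ᶠ y in nhds qτ, HasDerivAt (F 0) (fY y) y)
    (hfY_pos : 0 < fY qτ)
    -- joint continuous differentiability near (0, q_τ)
    (hC1 : ContDiffAt ℝ 1 (fun p : ℝ × ℝ => F p.1 p.2) (0, qτ)) :
    HasDerivAt (fun ε : ℝ => sInf {y : ℝ | τ ≤ F ε y}) (-(θ qτ) / fY qτ) 0 := by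
  set f : ℝ × ℝ → ℝ := fun p => F p.1 p.2
  have hf := hC1.hasStrictFDerivAt one_ne_zero
  have hθ_eq : fderiv ℝ f (0, qτ) (1, 0) = θ qτ :=
    hf.hasFDerivAt.hasDerivAt_prodMk_left.unique (hθ qτ)
  have hfY_eq : fderiv ℝ f (0, qτ) (0, 1) = fY qτ :=
    hf.hasFDerivAt.hasDerivAt_prodMk_right.unique hfY.self_of_nhds
  obtain ⟨ψ, hψ_lim, hψ_level, hψ_deriv⟩ := hf.exists_implicit_hasDerivAt (hfY_eq ▸ hfY_pos.ne')
  have hslope := hC1.eventually_exists_pos_hasDerivAt_prodMk_right (hfY_eq ▸ hfY_pos)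
  have hquantile : (fun ε => quantile (F ε) τ) =ᶠ[𝓝 0] ψ := by
    filter_upwards [hψ_level, (tendsto_id.prodMk_nhds hψ_lim).eventually hslope]
      with ε hε ⟨d, hd_pos, hd⟩
    exact (hCDF_mono ε).quantile_eq_of_hasDerivAt_pos (hε.trans hqτ) hd hd_pos
  rw [← hθ_eq, ← hfY_eq]
  exact hψ_deriv.congr_of_eventuallyEq hquantile

/-- UQPE representation; Corollary 1 of Firpo–Fortin–Lemieux.
`F ε y = F^ε_Y(y)` is a family of CDFs; `F 0 = F_Y`; `F · y` is differentiable
in `ε` at `0` with derivative `θ y`, continuous in `y`; `F 0` has a continuous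
positive density `f_Y` near its `τ`-quantile `q_τ` (with `F 0 q_τ = τ`); and
`(ε, y) ↦ F ε y` is `C¹` near `(0, q_τ)`.  Then the quantile function
`ε ↦ Q_τ(F^ε_Y) = inf {y : τ ≤ F ε y}` is differentiable at `ε = 0` with
derivative `-θ(q_τ) / f_Y(q_τ)`. -/
theorem uqpe_representation
    (F : ℝ → ℝ → ℝ) (θ fY : ℝ → ℝ) (τ qτ : ℝ)
    (hτ : τ ∈ Set.Ioo (0 : ℝ) 1)
    -- each F ε is a CDF
    (hCDF_mono : ∀ ε, Monotone (F ε))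
    (hCDF_range : ∀ ε y, 0 ≤ F ε y ∧ F ε y ≤ 1)
    -- qτ is the τ-quantile of F 0, i.e. F 0 q_τ = τ
    (hqτ : F 0 qτ = τ)
    (hqτ_inf : qτ = sInf {y : ℝ | τ ≤ F 0 y})
    -- differentiability in ε at 0, with derivative θ(y) continuous in y
    (hθ : ∀ y, HasDerivAt (fun ε => F ε y) (θ y) 0)
    (hθ_cont : Continuous θ)
    -- continuous positive density of F 0 in a neighborhood of q_τ
    (hfY : ∀ᶠ y in nhds qτ, HasDerivAt (F 0) (fY y) y)
    (hfY_cont : ContinuousAt fY qτ)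
    (hfY_pos : 0 < fY qτ)
    -- joint continuous differentiability near (0, q_τ)
    (hC1 : ContDiffAt ℝ 1 (fun p : ℝ × ℝ => F p.1 p.2) (0, qτ)) :
    HasDerivAt (fun ε : ℝ => sInf {y : ℝ | τ ≤ F ε y}) (-(θ qτ) / fY qτ) 0 :=
  uqpe_representation_general F θ fY τ qτ hCDF_mono hqτ hθ hfY hfY_pos hC1
end

section
/- Let $Y_1, \dots, Y_N$ be real numbers with order statistics $Y_{(1)} \le \cdots \le Y_{(N)}$, and let $\hat q^*_\tau = \arg\min_q \sum_{i=1}^N \rho_\tau(Y_i - q) - q \sum_{i=1}^N \eta_i(\tau - 1\{Y_i \le \hat q_\tau\})$, where $\rho_\tau(u) = u(\tau - 1\{u < 0\})$ is the check function, $\hat q_\tau$ is a fixed real number, and $\eta_1,\dots,\eta_N$ are real numbers such that $N\tau + \sum_i \eta_i(\tau - 1\{Y_i \le \hat q_\tau\})$ is not an integer and lies in $(0, N)$, and all $Y_i$ are distinct. Then $\hat q^*_\tau = Y_{(r)}$ where $r$ is the smallest integer with $r \ge N\tau + \sum_{i=1}^N \eta_i(\tau - 1\{Y_i \le \hat q_\tau\})$.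 -/
/-!
Up to the constant `τ ∑ Yᵢ`, the objective is `g q = ∑ᵢ (q - Yᵢ)⁺ - S q`, a convex piecewise
linear function whose right slope at `q` is `#{Yᵢ ≤ q} - S` and whose left slope is
`#{Yᵢ < q} - S`. At the `r`-th order statistic these are `r - S > 0` and `r - 1 - S < 0`
(as `S` is not an integer), so it is the unique minimizer.
-/

open Finset

lemma mul_sub_ite_neg_eq (τ u : ℝ) :
    u * (τ - if u < 0 then 1 else 0) = τ * u + max (-u) 0 := by
  split_ifs with h
  · rw [max_eq_left (by linarith)]; ring
  · rw [max_eq_right (by linarith)]; ring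

section PosPartSum

variable {ι : Type*} [Fintype ι] (y : ι → ℝ)

lemma sum_check_sub_mul_eq (τ E q : ℝ) :
    ∑ i, (y i - q) * (τ - if y i - q < 0 then 1 else 0) - q * E
      = τ * ∑ i, y i + (∑ i, max (q - y i) 0 - (Fintype.card ι * τ + E) * q) := by
  simp_rw [mul_sub_ite_neg_eq, neg_sub]
  rw [sum_add_distrib, ← mul_sum, sum_sub_distrib, sum_const, card_univ, nsmul_eq_mul]
  ring

lemma card_filter_le_mul_le_sum_sub {a b : ℝ} (hab : a ≤ b) :
    #{i | y i ≤ a} * (b - a) ≤ ∑ i, (max (b - y i) 0 - max (a - y i) 0) := by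
  rw [card_filter, Nat.cast_sum, sum_mul]
  gcongr with i
  push_cast
  split_ifs with hi
  · rw [max_eq_left (by linarith), max_eq_left (by linarith)]; linarith
  · rw [max_eq_right (by linarith [not_le.mp hi] : a - y i ≤ 0)]; simp

lemma card_filter_lt_mul_le_sum_sub {a b : ℝ} (hba : b ≤ a) :
    #{i | y i < a} * (b - a) ≤ ∑ i, (max (b - y i) 0 - max (a - y i) 0) := by
  rw [card_filter, Nat.cast_sum, sum_mul]
  gcongr with i
  push_cast
  split_ifs with hi
  · rw [max_eq_left (by linarith : 0 ≤ a - y i)]; linarith [le_max_left (b - y i) 0]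
  · rw [max_eq_right (by linarith), max_eq_right (by linarith)]; simp

theorem sum_max_sub_mul_lt_of_card_lt_of_lt_card {s a b : ℝ}
    (h_lt : (#{i | y i < a} : ℝ) < s) (h_le : s < #{i | y i ≤ a}) (hb : b ≠ a) :
    ∑ i, max (a - y i) 0 - s * a < ∑ i, max (b - y i) 0 - s * b := by
  rcases hb.lt_or_gt with hba | hab
  · have := card_filter_lt_mul_le_sum_sub y hba.le
    rw [sum_sub_distrib] at this
    nlinarith
  · have := card_filter_le_mul_le_sum_sub y hab.le
    rw [sum_sub_distrib] at this
    nlinarith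

end PosPartSum

section OrderStatistic

variable {α ι : Type*} [LinearOrder α] [Fintype ι] {n : ℕ} (Y : ι → α) (e : Fin n ≃ ι)

lemma card_filter_le_orderStatistic (h : StrictMono (Y ∘ e)) (k : Fin n) :
    #{i | Y i ≤ Y (e k)} = k + 1 := by
  rw [← Fin.card_Iic]
  exact (card_equiv e fun j => by simpa using h.le_iff_le.symm).symm

lemma card_filter_lt_orderStatistic (h : StrictMono (Y ∘ e)) (k : Fin n) :
    #{i | Y i < Y (e k)} = k := by
  rw [← Fin.card_Iio]
  exact (card_equiv e fun j => by simpa using h.lt_iff_lt.symm).symm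

end OrderStatistic

lemma setOf_forall_le_eq_singleton {α β : Type*} [Preorder β] {f : α → β} {a : α}
    (ha : ∀ b ≠ a, f a < f b) : {q | ∀ q', f q ≤ f q'} = {a} := by
  ext q
  refine ⟨fun hq => by_contra fun hne => (ha q hne).not_ge (hq a), ?_⟩
  rintro rfl b
  rcases eq_or_ne b q with rfl | hb
  exacts [le_rfl, (ha b hb).le]

/-- the bootstrap quantile is an order statistic.
`Y 0, …, Y (N-1)` are distinct reals, sorted by the permutation `σ`
(`Y ∘ σ` strictly monotone, so `Y (σ ⟨r-1,_⟩)` is the `r`-th order statistic).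
With `S = Nτ + ∑ᵢ ηᵢ (τ - 1{Yᵢ ≤ q̂_τ})` not an integer and `0 < S < N`, the
minimizer of `q ↦ ∑ᵢ ρ_τ(Yᵢ - q) - q ∑ᵢ ηᵢ (τ - 1{Yᵢ ≤ q̂_τ})` (with check
function `ρ_τ(u) = u (τ - 1{u < 0})`) is exactly the `r`-th order statistic,
where `r` is the smallest integer with `r ≥ S`. -/
theorem bootstrap_quantile_order_statistic
    (N : ℕ)
    (Y : Fin N → ℝ)
    (σ : Equiv.Perm (Fin N)) (hσ : StrictMono (Y ∘ σ))
    (η : Fin N → ℝ) (qhat : ℝ) (τ : ℝ)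
    (S : ℝ)
    (hS : S = N * τ + ∑ i, η i * (τ - if Y i ≤ qhat then 1 else 0))
    (hS_not_int : ¬ ∃ k : ℤ, S = k)
    (r : ℕ) (hr_ge : S ≤ r) (hr_min : (r : ℝ) - 1 < S)
    (hr_pos : 1 ≤ r) (hr_le : r ≤ N) :
    {q : ℝ | ∀ q' : ℝ,
        (∑ i, (Y i - q) * (τ - if Y i - q < 0 then 1 else 0))
          - q * (∑ i, η i * (τ - if Y i ≤ qhat then 1 else 0))
        ≤ (∑ i, (Y i - q') * (τ - if Y i - q' < 0 then 1 else 0))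
          - q' * (∑ i, η i * (τ - if Y i ≤ qhat then 1 else 0))}
      = {Y (σ ⟨r - 1, by omega⟩)} := by
  have hS_lt_r : S < r := hr_ge.lt_of_ne fun h => hS_not_int ⟨r, by exact_mod_cast h⟩
  have hk : ((r - 1 : ℕ) : ℝ) = r - 1 := by push_cast [hr_pos]; ring
  refine setOf_forall_le_eq_singleton fun b hb => ?_
  rw [sum_check_sub_mul_eq, sum_check_sub_mul_eq, Fintype.card_fin, ← hS, add_lt_add_iff_left]
  refine sum_max_sub_mul_lt_of_card_lt_of_lt_card Y ?_ ?_ hb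
  · rw [card_filter_lt_orderStatistic Y σ hσ]; simpa [hk] using hr_min
  · rw [card_filter_le_orderStatistic Y σ hσ]; push_cast [hk]; linarith
end
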